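/- arXiv:1410.4095 — 3 statements merged into one kernel-verified Lean document; each statement's English description precedes it below -/
import Mathlib

section
/- For the univariate monomial x^d over a commutative ring R and nonzero steps h_1,...,h_k ∈ R, the k-th order finite difference satisfies Δ_{h_1} ... Δ_{h_k} (x^d) = Σ_{j=k}^{d} ( Σ_{(i_1,...,i_k), each i_ℓ ≥ 1, i_1+...+i_k = j} multinomial(d; i_1,...,i_k, d−j) · h_1^{i_1} ⋯ h_k^{i_k} ) · x^{d−j}. -/
/-!
Expanding `(y + s) ^ m - y ^ m` binomially, each difference operator lowers the power of `y`
by some `a ≥ 1` and contributes `s ^ a`. Inducting on the number of steps, the coefficient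
of `∏ h_l ^ i_l · x ^ (d - ∑ i)` is `C(d, ∑ i) · multinomial(i)`, because
`C(d, a + s) · C(a + s, a) = C(d, s) · C(d - s, a)`. Grouping by `j = ∑ i` and using
`C(d, j) · multinomial(i) = d! / (∏ i_l! · (d - j)!)` gives the formula.
-/

open Finset Nat fwdDiff

lemma Nat.multinomial_univ_fin_cons {k : ℕ} (a : ℕ) (i : Fin k → ℕ) :
    Nat.multinomial univ (Fin.cons a i : Fin (k + 1) → ℕ) =
      (a + ∑ l, i l).choose a * Nat.multinomial univ i := by
  rw [Fin.univ_succ, Nat.multinomial_cons]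
  simp [Nat.multinomial, Finset.sum_map, Finset.prod_map]

lemma Nat.choose_mul_multinomial_univ_fin_cons {k : ℕ} (d a : ℕ) (i : Fin k → ℕ) :
    d.choose (a + ∑ l, i l) * Nat.multinomial univ (Fin.cons a i : Fin (k + 1) → ℕ) =
      d.choose (∑ l, i l) * Nat.multinomial univ i * (d - ∑ l, i l).choose a := by
  rw [Nat.multinomial_univ_fin_cons, ← mul_assoc, Nat.choose_symm_add,
    Nat.choose_mul (Nat.le_add_left _ _), Nat.add_sub_cancel]
  ring

lemma Finset.sum_piFinset_fin_succ {α M : Type*} [AddCommMonoid M] {k : ℕ} (s : Finset α)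
    (f : (Fin (k + 1) → α) → M) :
    ∑ i ∈ Fintype.piFinset (fun _ ↦ s), f i =
      ∑ a ∈ s, ∑ i ∈ Fintype.piFinset (fun _ : Fin k ↦ s), f (Fin.cons a i) := by
  rw [← sum_product']
  refine sum_nbij' (fun i ↦ (i 0, Fin.tail i)) (fun p ↦ Fin.cons p.1 p.2) ?_ ?_ ?_ ?_ ?_ <;>
    simp [Fin.forall_fin_succ, Fin.tail]

lemma add_pow_sub_pow_eq_sum_Icc {R : Type*} [CommRing R] (y s : R) {m n : ℕ} (hmn : m ≤ n) :
    (y + s) ^ m - y ^ m = ∑ i ∈ Icc 1 n, (m.choose i : R) * s ^ i * y ^ (m - i) := by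
  have hvanish : ∀ i ∈ range (n + 1), i ∉ range (m + 1) →
      s ^ i * y ^ (m - i) * (m.choose i : R) = 0 := by
    intro i _ hi
    rw [Nat.choose_eq_zero_of_lt (by simpa using hi)]
    simp
  rw [add_comm y, add_pow, sum_subset (range_subset_range.2 (by omega)) hvanish,
    range_eq_Ico, sum_eq_sum_Ico_succ_bot (by omega), ← Ico_add_one_right_eq_Icc]
  simp only [pow_zero, one_mul, Nat.sub_zero, Nat.choose_zero_right, Nat.cast_one, mul_one,
    add_sub_cancel_left]
  exact sum_congr rfl fun i _ ↦ by ring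

lemma Nat.choose_mul_multinomial {α : Type*} (s : Finset α) (i : α → ℕ) {d : ℕ}
    (hd : ∑ l ∈ s, i l ≤ d) :
    d.choose (∑ l ∈ s, i l) * Nat.multinomial s i =
      d ! / ((∏ l ∈ s, (i l)!) * (d - ∑ l ∈ s, i l)!) := by
  symm
  apply Nat.div_eq_of_eq_mul_left (by positivity)
  rw [← Nat.choose_mul_factorial_mul_factorial hd, ← Nat.multinomial_spec]
  ring

/-- The sum ranges over all tuples in `[1, d]ᵏ`: those with `∑ i > d` contribute `0`, since then
`d.choose (∑ i) = 0`. This keeps the index set a plain product, which splits off `Fin.cons`. -/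
theorem foldr_fwdDiff_pow {R : Type*} [CommRing R] {k : ℕ} (h : Fin k → R) (d : ℕ) (x : R) :
    (List.ofFn h).foldr fwdDiff (· ^ d) x =
      ∑ i ∈ Fintype.piFinset fun _ : Fin k ↦ Icc 1 d,
        ((d.choose (∑ l, i l) * Nat.multinomial univ i : ℕ) : R) * (∏ l, h l ^ i l) *
          x ^ (d - ∑ l, i l) := by
  induction k generalizing x with
  | zero => simp
  | succ k ih =>
    rw [List.ofFn_succ, List.foldr_cons, funext (ih fun l ↦ h l.succ), sum_piFinset_fin_succ,
      sum_comm]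
    simp only [fwdDiff, ← sum_sub_distrib, ← mul_sub]
    refine sum_congr rfl fun i _ ↦ ?_
    rw [add_pow_sub_pow_eq_sum_Icc x (h 0) (Nat.sub_le d _), mul_sum]
    refine sum_congr rfl fun a _ ↦ ?_
    rw [Fin.sum_cons, Nat.choose_mul_multinomial_univ_fin_cons, Fin.prod_univ_succ, Nat.sub_sub,
      add_comm a]
    simp only [Fin.cons_zero, Fin.cons_succ]
    push_cast
    ring

theorem finite_difference_monomial_formula_general
    {R : Type*} [CommRing R] {k d : ℕ} (h : Fin k → R)
    (x : R) :
    ((List.ofFn h).foldr (fun s g => fun y => g (y + s) - g y)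
        (fun y => y ^ d)) x =
      ∑ j ∈ Finset.Icc k d,
        (∑ i ∈ (Fintype.piFinset fun _ : Fin k => Finset.range (d + 1)) |>.filter
            (fun i => (∀ l, 1 ≤ i l) ∧ ∑ l, i l = j),
          ((d.factorial / ((∏ l, (i l).factorial) * (d - j).factorial) : ℕ) : R) *
            ∏ l, h l ^ i l) * x ^ (d - j) := by
  refine (foldr_fwdDiff_pow h d x).trans ?_
  have hsupport : ∀ i ∈ Fintype.piFinset fun _ : Fin k ↦ Icc 1 d,
      ((d.choose (∑ l, i l) * Nat.multinomial univ i : ℕ) : R) * (∏ l, h l ^ i l) *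
        x ^ (d - ∑ l, i l) ≠ 0 → ∑ l, i l ∈ Icc k d := by
    intro i hi hne
    simp only [Fintype.mem_piFinset, mem_Icc] at hi
    refine mem_Icc.2 ⟨?_, ?_⟩
    · simpa using card_nsmul_le_sum univ i 1 fun l _ ↦ (hi l).1
    · by_contra hlt
      simp [Nat.choose_eq_zero_of_lt (not_le.1 hlt)] at hne
  rw [← sum_filter_of_ne hsupport, ← sum_fiberwise_eq_sum_filter]
  refine sum_congr rfl fun j hj ↦ ?_
  have hfiber : {i ∈ Fintype.piFinset fun _ : Fin k ↦ Icc 1 d | ∑ l, i l = j} =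
      {i ∈ Fintype.piFinset fun _ : Fin k ↦ range (d + 1) | (∀ l, 1 ≤ i l) ∧ ∑ l, i l = j} := by
    ext i
    simp only [mem_filter, Fintype.mem_piFinset, mem_Icc, mem_range, Nat.lt_succ_iff, forall_and]
    tauto
  rw [hfiber, sum_mul]
  refine sum_congr rfl fun i hi ↦ ?_
  obtain rfl := (mem_filter.1 hi).2.2
  rw [Nat.choose_mul_multinomial univ i (mem_Icc.1 hj).2]

/-- Explicit formula for the k-th order finite difference of the monomial `x^d`
with steps `h_1, …, h_k`, in terms of multinomial coefficients. -/
theorem finite_difference_monomial_formula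
    {R : Type*} [CommRing R] {k d : ℕ} (h : Fin k → R) (hh : ∀ l, h l ≠ 0)
    (x : R) :
    ((List.ofFn h).foldr (fun s g => fun y => g (y + s) - g y)
        (fun y => y ^ d)) x =
      ∑ j ∈ Finset.Icc k d,
        (∑ i ∈ (Fintype.piFinset fun _ : Fin k => Finset.range (d + 1)) |>.filter
            (fun i => (∀ l, 1 ≤ i l) ∧ ∑ l, i l = j),
          ((d.factorial / ((∏ l, (i l).factorial) * (d - j).factorial) : ℕ) : R) *
            ∏ l, h l ^ i l) * x ^ (d - j) :=
  finite_difference_monomial_formula_general h x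
end

section
/- Let f : GF(p)^n → GF(p) be a polynomial function, t = ∏_{j=1}^k x_{i_j}^{m_j} with each 1 ≤ m_j ≤ p−1, and write f = t·f_{S(t)} + r where no monomial of r is divisible by t. Let f_t denote the iterated finite difference of f (m_j times w.r.t. x_{i_j}, steps 1). Then deg(f_t) ≤ deg(f_{S(t)}). In particular, if deg(t) = deg(f) − 1, then f_t is linear or constant (total degree at most 1). -/
/-!
The difference operator `Δ_a` in the variable `a` sends a monomial `X^v` to a combination of
monomials `X^u` with `u + e_a ≤ v`, because `(X_a + 1)^e - X_a^e` has degree `e - 1` in `X_a`.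
So every monomial of `f_t` lies below a monomial `X^v` of `f` by at least the exponent `d` of `t`.
Such an `X^v` is divisible by `t`, hence does not come from `r` and is `t` times a monomial of `g`;
this gives `deg f_t ≤ deg g`. Conversely, `t` times any monomial of `g` survives in `f`, so
`deg g ≤ deg f - deg t`, which is at most `1` when `deg t = deg f - 1`.
-/

open MvPolynomial

namespace MvPolynomial

variable {σ : Type*}

section SupportBelow

variable {R : Type*} [CommSemiring R]

def SupportBelow (d : σ →₀ ℕ) (Q P : MvPolynomial σ R) : Prop :=
  ∀ u ∈ Q.support, ∃ v ∈ P.support, u + d ≤ v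

theorem SupportBelow.refl (P : MvPolynomial σ R) : SupportBelow 0 P P :=
  fun u hu => ⟨u, hu, by rw [add_zero]⟩

theorem SupportBelow.trans {d e : σ →₀ ℕ} {P Q T : MvPolynomial σ R}
    (hQ : SupportBelow d Q P) (hT : SupportBelow e T Q) : SupportBelow (e + d) T P := by
  intro u hu
  obtain ⟨w, hw, hwu⟩ := hT u hu
  obtain ⟨v, hv, hvw⟩ := hQ w hw
  exact ⟨v, hv, by rw [← add_assoc]; exact (add_le_add_left hwu d).trans hvw⟩

variable {d : σ →₀ ℕ} {f g r : MvPolynomial σ R}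

theorem sub_mem_support_of_le (hf : f = monomial d 1 * g + r) (hr : ∀ v ∈ r.support, ¬ d ≤ v)
    {v : σ →₀ ℕ} (hv : v ∈ f.support) (hdv : d ≤ v) : v - d ∈ g.support := by
  have hrv : coeff v r = 0 := notMem_support_iff.mp fun h => hr v h hdv
  rw [mem_support_iff] at hv ⊢
  rwa [hf, coeff_add, hrv, add_zero, coeff_monomial_mul', if_pos hdv, one_mul] at hv

theorem add_mem_support_of_mem_support (hf : f = monomial d 1 * g + r)
    (hr : ∀ v ∈ r.support, ¬ d ≤ v) {w : σ →₀ ℕ} (hw : w ∈ g.support) :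
    d + w ∈ f.support := by
  have hrv : coeff (d + w) r = 0 := notMem_support_iff.mp fun h => hr _ h le_self_add
  rw [mem_support_iff] at hw ⊢
  rwa [hf, coeff_add, hrv, add_zero, coeff_monomial_mul, one_mul]

theorem totalDegree_le_of_supportBelow (hf : f = monomial d 1 * g + r)
    (hr : ∀ v ∈ r.support, ¬ d ≤ v) {Q : MvPolynomial σ R} (hQ : SupportBelow d Q f) :
    Q.totalDegree ≤ g.totalDegree := by
  refine Finset.sup_le fun u hu => ?_
  obtain ⟨v, hv, huv⟩ := hQ u hu
  calc u.degree ≤ (v - d).degree := Finsupp.degree_mono (le_tsub_of_add_le_right huv)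
    _ ≤ g.totalDegree :=
      le_totalDegree (sub_mem_support_of_le hf hr hv (le_of_add_le_right huv))

theorem totalDegree_le_sub_degree (hf : f = monomial d 1 * g + r)
    (hr : ∀ v ∈ r.support, ¬ d ≤ v) : g.totalDegree ≤ f.totalDegree - d.degree := by
  refine Finset.sup_le fun w hw => ?_
  have hdw : (d + w).degree ≤ f.totalDegree :=
    le_totalDegree (add_mem_support_of_mem_support hf hr hw)
  rw [map_add] at hdw
  exact Nat.le_sub_of_add_le' hdw

end SupportBelow

section FwdDiffVar

variable {R : Type*} [CommRing R] [DecidableEq σ]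

noncomputable def fwdDiffVar (a : σ) : MvPolynomial σ R →ₗ[R] MvPolynomial σ R :=
  (bind₁ (Function.update X a (X a + 1))).toLinearMap - LinearMap.id

theorem fwdDiffVar_monomial (a : σ) (v : σ →₀ ℕ) (c : R) :
    fwdDiffVar a (monomial v c) =
      ∑ k ∈ Finset.range (v a),
        monomial (v.erase a + Finsupp.single a k) (c * (v a).choose k) := by
  have hsplit : monomial v c = monomial (v.erase a) c * (X a : MvPolynomial σ R) ^ v a := by
    rw [X_pow_eq_monomial, monomial_mul, mul_one, Finsupp.erase_add_single]
  have hfix : bind₁ (Function.update X a (X a + 1)) (monomial (v.erase a) c)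
      = (monomial (v.erase a) c : MvPolynomial σ R) := by
    rw [bind₁_monomial, monomial_eq]
    congr 1
    refine Finset.prod_congr rfl fun j hj => ?_
    rw [Function.update_of_ne (by rintro rfl; simp at hj)]
  have hbinom : (X a + 1 : MvPolynomial σ R) ^ v a - X a ^ v a
      = ∑ k ∈ Finset.range (v a), X a ^ k * ((v a).choose k : MvPolynomial σ R) := by
    rw [add_pow, Finset.sum_range_succ]
    simp
  calc fwdDiffVar a (monomial v c)
      = monomial (v.erase a) c * ((X a + 1) ^ v a - X a ^ v a) := by
        simp only [fwdDiffVar, LinearMap.sub_apply, AlgHom.toLinearMap_apply, LinearMap.id_apply]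
        rw [hsplit, map_mul, hfix, map_pow, bind₁_X_right, Function.update_self, mul_sub]
    _ = _ := by
        rw [hbinom, Finset.mul_sum]
        refine Finset.sum_congr rfl fun k _ => ?_
        rw [X_pow_eq_monomial, ← map_natCast (C : R →+* MvPolynomial σ R),
          mul_comm (monomial _ 1), C_mul_monomial, mul_one, monomial_mul]

theorem supportBelow_fwdDiffVar (a : σ) (P : MvPolynomial σ R) :
    SupportBelow (Finsupp.single a 1) (fwdDiffVar a P) P := by
  intro u hu
  rw [P.as_sum, map_sum] at hu
  obtain ⟨v, hv, hu⟩ := Finset.mem_biUnion.mp (support_sum hu)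
  rw [fwdDiffVar_monomial] at hu
  obtain ⟨k, hk, hu⟩ := Finset.mem_biUnion.mp (support_sum hu)
  obtain rfl := Finset.mem_singleton.mp (support_monomial_subset hu)
  refine ⟨v, hv, fun b => ?_⟩
  rcases eq_or_ne b a with rfl | hba
  · simpa using Finset.mem_range.mp hk
  · simp [Finsupp.erase_ne hba, hba.symm]

theorem supportBelow_fwdDiffVar_iterate (a : σ) (m : ℕ) (P : MvPolynomial σ R) :
    SupportBelow (Finsupp.single a m) ((fwdDiffVar a)^[m] P) P := by
  induction m with
  | zero => simpa using SupportBelow.refl P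
  | succ m ih =>
    rw [Function.iterate_succ_apply', Finsupp.single_add, add_comm]
    exact ih.trans (supportBelow_fwdDiffVar a _)

theorem supportBelow_foldr_fwdDiffVar_iterate {ι : Type*} (idx : ι → σ) (m : ι → ℕ)
    (L : List ι) (P : MvPolynomial σ R) :
    SupportBelow (L.map fun j => Finsupp.single (idx j) (m j)).sum
      (L.foldr (fun j Q => (fwdDiffVar (idx j))^[m j] Q) P) P := by
  induction L with
  | nil => exact SupportBelow.refl P
  | cons j L ih =>
    rw [List.foldr_cons, List.map_cons, List.sum_cons]
    exact ih.trans (supportBelow_fwdDiffVar_iterate _ _ _)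

end FwdDiffVar

end MvPolynomial

theorem finite_difference_degree_bound_general
    (p : ℕ) {n k : ℕ}
    (i : Fin k → Fin n)
    (m : Fin k → ℕ)
    (f g r : MvPolynomial (Fin n) (ZMod p))
    (hf : f = (∏ j, X (i j) ^ m j) * g + r)
    (hr : ∀ s ∈ r.support, ∃ j : Fin k, s (i j) < m j)
    (ft : MvPolynomial (Fin n) (ZMod p))
    (hft : ft = (List.finRange k).foldr
      (fun j P₀ =>
        (fun P : MvPolynomial (Fin n) (ZMod p) =>
            bind₁ (Function.update X (i j) (X (i j) + 1)) P - P)^[m j] P₀)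
      f) :
    ft.totalDegree ≤ g.totalDegree ∧
      ((∏ j, X (i j) ^ m j : MvPolynomial (Fin n) (ZMod p)).totalDegree =
          f.totalDegree - 1 →
        ft.totalDegree ≤ 1) := by
  set d : Fin n →₀ ℕ := ∑ j, Finsupp.single (i j) (m j)
  have ht : (∏ j, X (i j) ^ m j : MvPolynomial (Fin n) (ZMod p)) = monomial d 1 := by
    simp only [X_pow_eq_monomial, d, monomial_sum_one]
  have hr_ndvd : ∀ v ∈ r.support, ¬ d ≤ v := fun v hv hdv => by
    obtain ⟨j, hj⟩ := hr v hv
    have hmj : Finsupp.single (i j) (m j) ≤ d :=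
      Finset.single_le_sum (f := fun j => Finsupp.single (i j) (m j))
        (fun _ _ => zero_le) (Finset.mem_univ j)
    exact hj.not_ge (by simpa using (hmj.trans hdv) (i j))
  have hbelow : SupportBelow d ft f := by
    have hd : d = ((List.finRange k).map fun j => Finsupp.single (i j) (m j)).sum :=
      Fin.sum_univ_def _
    rw [hft, hd]
    exact supportBelow_foldr_fwdDiffVar_iterate i m _ f
  rw [ht] at hf ⊢
  have hft_le := totalDegree_le_of_supportBelow hf hr_ndvd hbelow
  refine ⟨hft_le, fun hdeg => ?_⟩
  have hg_le := totalDegree_le_sub_degree hf hr_ndvd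
  have ht_le : _ ≤ d.degree := totalDegree_monomial_le d (1 : ZMod p)
  omega

/-- Write `f = t·f_{S(t)} + r` with `t = ∏ x_{i_j}^{m_j}` and no monomial of `r`
divisible by `t`. Then the iterated finite difference `f_t` satisfies
`deg f_t ≤ deg f_{S(t)}`; in particular if `deg t = deg f − 1` then `f_t` is
linear or constant. -/
theorem finite_difference_degree_bound
    (p : ℕ) [Fact p.Prime] {n k : ℕ}
    (i : Fin k → Fin n) (hi : Function.Injective i)
    (m : Fin k → ℕ) (hm : ∀ j, 1 ≤ m j) (hmp : ∀ j, m j ≤ p - 1)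
    (f g r : MvPolynomial (Fin n) (ZMod p))
    (hfred : ∀ j : Fin n, f.degreeOf j ≤ p - 1)
    (hf : f = (∏ j, X (i j) ^ m j) * g + r)
    (hr : ∀ s ∈ r.support, ∃ j : Fin k, s (i j) < m j)
    (ft : MvPolynomial (Fin n) (ZMod p))
    (hft : ft = (List.finRange k).foldr
      (fun j P₀ =>
        (fun P : MvPolynomial (Fin n) (ZMod p) =>
            bind₁ (Function.update X (i j) (X (i j) + 1)) P - P)^[m j] P₀)
      f) :
    ft.totalDegree ≤ g.totalDegree ∧
      ((∏ j, X (i j) ^ m j : MvPolynomial (Fin n) (ZMod p)).totalDegree =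
          f.totalDegree - 1 →
        ft.totalDegree ≤ 1) :=
  finite_difference_degree_bound_general p i m f g r hf hr ft hft
end

section
/- Let S_p(a) denote the sum of the base-p digits of a nonnegative integer a. For d = p·d' + d_0 with 0 ≤ d_0 < p, and A = x_0 b_0 + x_1 b_1 + ... + x_{m-1} b_{m-1} where b_0,...,b_{m-1} is a basis of GF(p^m) over GF(p) and x_j are variables over GF(p): the total degree (as a reduced polynomial function over GF(p)) of each GF(p)-coordinate of A^d in the variables x_0,...,x_{m-1} is at most S_p(d). -/
/-!
Frobenius `y ↦ y ^ p` is additive on `GF(p^m)` and fixes `GF(p)`, so `A ^ p = ∑ x_j b_j ^ p` is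
again a linear form in the `x_j`. Hence `A ^ (d₀ + p d') = A ^ d₀ · (A ^ p) ^ d'`, and induction on
the base-`p` digits of `d` writes `A ^ d` as a polynomial over `GF(p^m)` of total degree at most
`S_p(d)`. Taking a coordinate of every coefficient gives a polynomial over `GF(p)` of no larger
degree, and reducing exponents with `x ^ p = x` makes it reduced without raising the degree.
-/

open MvPolynomial

/-- The representative of `e` in `{1, …, q - 1}` modulo `q - 1`, except that `0` stays `0`
(since `0 ^ e ≠ 0 ^ 0` for `e ≠ 0`). -/
def reducedExponent (q e : ℕ) : ℕ :=
  if e = 0 then 0 else (e - 1) % (q - 1) + 1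

theorem reducedExponent_zero (q : ℕ) : reducedExponent q 0 = 0 := rfl

theorem reducedExponent_le (q e : ℕ) : reducedExponent q e ≤ e := by
  unfold reducedExponent
  split_ifs
  · omega
  · have := Nat.mod_le (e - 1) (q - 1)
    omega

theorem reducedExponent_le_pred {q : ℕ} (hq : 1 < q) (e : ℕ) : reducedExponent q e ≤ q - 1 := by
  unfold reducedExponent
  split_ifs
  · omega
  · have := Nat.mod_lt (e - 1) (y := q - 1) (by omega)
    omega

theorem FiniteField.pow_reducedExponent {K : Type*} [GroupWithZero K] [Fintype K] (x : K) (e : ℕ) :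
    x ^ reducedExponent (Fintype.card K) e = x ^ e := by
  unfold reducedExponent
  split_ifs with he
  · rw [he]
  rcases eq_or_ne x 0 with rfl | hx
  · rw [zero_pow he, zero_pow (Nat.succ_ne_zero _)]
  · rw [pow_succ, ← pow_eq_pow_mod _ (FiniteField.pow_card_sub_one_eq_one x hx), ← pow_succ,
      Nat.sub_add_cancel (Nat.one_le_iff_ne_zero.2 he)]

namespace MvPolynomial

variable {σ K A : Type*}

section Algebra

variable [CommSemiring K] [CommSemiring A] [Algebra K A]

noncomputable def mapCoeffs (f : A →ₗ[K] K) (P : MvPolynomial σ A) : MvPolynomial σ K :=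
  ∑ s ∈ P.support, monomial s (f (P.coeff s))

theorem totalDegree_mapCoeffs_le (f : A →ₗ[K] K) (P : MvPolynomial σ A) :
    (mapCoeffs f P).totalDegree ≤ P.totalDegree :=
  totalDegree_finsetSum_le fun _ hs => (totalDegree_monomial_le _ _).trans (le_totalDegree hs)

theorem eval_mapCoeffs (f : A →ₗ[K] K) (P : MvPolynomial σ A) (x : σ → K) :
    eval x (mapCoeffs f P) = f (eval (algebraMap K A ∘ x) P) := by
  rw [mapCoeffs, map_sum, eval_eq, map_sum]
  refine Finset.sum_congr rfl fun s _ => ?_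
  simp only [eval_monomial, Finsupp.prod, Function.comp_apply, ← map_pow, ← map_prod,
    ← Algebra.commutes, ← Algebra.smul_def, map_smul, smul_eq_mul]
  exact mul_comm _ _

theorem exists_totalDegree_le_one_eval_linearForm [Fintype σ] (c : σ → A) :
    ∃ L : MvPolynomial σ A, (∀ x : σ → K, eval (algebraMap K A ∘ x) L = ∑ j, x j • c j) ∧
      L.totalDegree ≤ 1 := by
  refine ⟨∑ j, monomial (Finsupp.single j 1) (c j), fun x => ?_, ?_⟩
  · simp [eval_monomial, Algebra.smul_def, mul_comm]
  · exact totalDegree_finsetSum_le fun j _ => (totalDegree_monomial_le _ _).trans (by simp)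

end Algebra

section ReduceDegrees

variable [CommSemiring K]

noncomputable def reduceDegrees (q : ℕ) (P : MvPolynomial σ K) : MvPolynomial σ K :=
  ∑ s ∈ P.support, monomial (s.mapRange (reducedExponent q) (reducedExponent_zero q)) (P.coeff s)

theorem degreeOf_reduceDegrees_le {q : ℕ} (hq : 1 < q) (P : MvPolynomial σ K) (j : σ) :
    (reduceDegrees q P).degreeOf j ≤ q - 1 := by
  refine (degreeOf_sum_le _ _ _).trans <|
    Finset.sup_le fun s _ => degreeOf_le_iff.mpr fun t ht => ?_
  rw [Finset.mem_singleton.mp (support_monomial_subset ht), Finsupp.mapRange_apply]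
  exact reducedExponent_le_pred hq _

theorem totalDegree_reduceDegrees_le (q : ℕ) (P : MvPolynomial σ K) :
    (reduceDegrees q P).totalDegree ≤ P.totalDegree := by
  refine totalDegree_finsetSum_le fun s hs => (totalDegree_monomial_le _ _).trans ?_
  refine le_trans ?_ (le_totalDegree hs)
  rw [Finsupp.sum_mapRange_index fun _ => rfl]
  exact Finset.sum_le_sum fun j _ => reducedExponent_le q (s j)

theorem eval_reduceDegrees {K : Type*} [Field K] [Fintype K] {q : ℕ} (hq : Fintype.card K = q)
    (P : MvPolynomial σ K) (x : σ → K) : eval x (reduceDegrees q P) = eval x P := by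
  subst hq
  rw [reduceDegrees, map_sum, eval_eq]
  refine Finset.sum_congr rfl fun s _ => ?_
  rw [eval_monomial, Finsupp.prod_mapRange_index fun _ => pow_zero _]
  simp only [Finsupp.prod, FiniteField.pow_reducedExponent]

end ReduceDegrees

section LinearFormPow

variable [Field K] [Fintype K] [CommRing A] [Algebra K A] [Fintype σ]

theorem _root_.FiniteField.sum_smul_pow_card (x : σ → K) (c : σ → A) :
    (∑ j, x j • c j) ^ Fintype.card K = ∑ j, x j • c j ^ Fintype.card K := by
  simpa only [map_smul, FiniteField.coe_frobeniusAlgHom] using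
    map_sum (FiniteField.frobeniusAlgHom K A) (fun j => x j • c j) Finset.univ

theorem exists_totalDegree_le_eval_linearForm_pow_ofDigits (c : σ → A) (L : List ℕ) :
    ∃ R : MvPolynomial σ A,
      (∀ x : σ → K, eval (algebraMap K A ∘ x) R =
        (∑ j, x j • c j) ^ Nat.ofDigits (Fintype.card K) L) ∧
      R.totalDegree ≤ L.sum := by
  induction L generalizing c with
  | nil => exact ⟨1, by simp, by simp⟩
  | cons a L ih =>
    obtain ⟨R, hR, hRdeg⟩ := ih fun j => c j ^ Fintype.card K
    obtain ⟨Λ, hΛ, hΛdeg⟩ := exists_totalDegree_le_one_eval_linearForm (K := K) c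
    refine ⟨Λ ^ a * R, fun x => ?_, ?_⟩
    · rw [map_mul, map_pow, hΛ, hR, ← FiniteField.sum_smul_pow_card, ← pow_mul, ← pow_add,
        Nat.ofDigits_cons]
    · calc (Λ ^ a * R).totalDegree ≤ a * Λ.totalDegree + R.totalDegree :=
            (totalDegree_mul _ _).trans (Nat.add_le_add_right (totalDegree_pow _ _) _)
        _ ≤ a * 1 + L.sum := by gcongr
        _ = (a :: L).sum := by simp

end LinearFormPow

end MvPolynomial

theorem coordinate_degree_le_digit_sum_general
    (p m : ℕ) (hp : p.Prime)
    {F : Type*} [Field F]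
    [Algebra (ZMod p) F] (b : Module.Basis (Fin m) (ZMod p) F) (d : ℕ)
    (i : Fin m) :
    ∃ P : MvPolynomial (Fin m) (ZMod p),
      (∀ j : Fin m, P.degreeOf j ≤ p - 1) ∧
      (∀ x : Fin m → ZMod p,
        eval x P = b.repr ((∑ j, x j • b j) ^ d) i) ∧
      P.totalDegree ≤ (Nat.digits p d).sum := by
  have : Fact p.Prime := ⟨hp⟩
  obtain ⟨R, hR, hRdeg⟩ :=
    exists_totalDegree_le_eval_linearForm_pow_ofDigits (K := ZMod p) b (Nat.digits p d)
  rw [ZMod.card, Nat.ofDigits_digits] at hR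
  set Q := mapCoeffs (b.coord i) R
  refine ⟨reduceDegrees p Q, degreeOf_reduceDegrees_le hp.one_lt Q, fun x => ?_,
    (totalDegree_reduceDegrees_le p Q).trans ((totalDegree_mapCoeffs_le _ R).trans hRdeg)⟩
  rw [eval_reduceDegrees (ZMod.card p), eval_mapCoeffs, hR, Module.Basis.coord_apply]

/-- Each `GF(p)`-coordinate of `A^d`, where `A = x_0 b_0 + ⋯ + x_{m-1} b_{m-1}`
for a basis `b` of `GF(p^m)` over `GF(p)`, is represented by a reduced polynomial
(of degree at most `p−1` in each variable) over `GF(p)` whose total degree is at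
most the sum `S_p(d)` of the base-`p` digits of `d`. -/
theorem coordinate_degree_le_digit_sum
    (p m : ℕ) (hp : p.Prime) (hm : 1 ≤ m)
    {F : Type*} [Field F] [Fintype F] (hcard : Fintype.card F = p ^ m)
    [Algebra (ZMod p) F] (b : Module.Basis (Fin m) (ZMod p) F) (d : ℕ)
    (i : Fin m) :
    ∃ P : MvPolynomial (Fin m) (ZMod p),
      (∀ j : Fin m, P.degreeOf j ≤ p - 1) ∧
      (∀ x : Fin m → ZMod p,
        eval x P = b.repr ((∑ j, x j • b j) ^ d) i) ∧
      P.totalDegree ≤ (Nat.digits p d).sum :=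
  coordinate_degree_le_digit_sum_general p m hp b d i
end
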